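/- arXiv:2505.11662 — 3 statements merged into one kernel-verified Lean document; each statement's English description precedes it below -/
import Mathlib

section
/- Let q ≥ 0, d ≥ 1, r ≥ 1 be integers. Let U_1 ⊆ ℂ^q and U_2 ⊆ ℂ^d be open sets with 0 ∈ U_2 and U_2 connected, and set V = U_1 × U_2. Let A_1, …, A_d be r×r complex-matrix-valued complex-analytic functions on V. Suppose f_1, f_2 : V → ℂ^r are complex-analytic and both satisfy ∂f/∂y_k = A_k · f on V for every 1 ≤ k ≤ d, and that f_1(x, 0) = f_2(x, 0) for every x ∈ U_1. Then f_1 = f_2 on V. -/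
/-! Fix the parameter `x`. Along a segment `y₀ + t (y - y₀)` in `U₂`, a solution satisfies the
linear ODE `u' = (∑ₖ (y - y₀)ₖ Aₖ) u`, so by uniqueness for linear ODEs two solutions that agree
at the centre of a ball contained in `U₂` agree on that ball. Hence the set of `y ∈ U₂` with
`f₁ (x, y) = f₂ (x, y)` is open; it is relatively closed by continuity and contains `0`, so it is
all of the connected set `U₂`. -/

open Set Metric Filter Topology Matrix

theorem ContinuousLinearMap.ODE_solution_unique_of_mem_Icc
    {𝕜 E : Type*} [NontriviallyNormedField 𝕜] [NormedAddCommGroup E] [NormedSpace 𝕜 E]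
    [NormedSpace ℝ E] {M : ℝ → E →L[𝕜] E} {a b : ℝ} (hM : ContinuousOn M (Icc a b))
    {f g : ℝ → E} (hf : ContinuousOn f (Icc a b))
    (hf' : ∀ t ∈ Ico a b, HasDerivWithinAt f (M t (f t)) (Ici t) t)
    (hg : ContinuousOn g (Icc a b))
    (hg' : ∀ t ∈ Ico a b, HasDerivWithinAt g (M t (g t)) (Ici t) t)
    (ha : f a = g a) : EqOn f g (Icc a b) := by
  obtain ⟨C, hC⟩ := isCompact_Icc.exists_bound_of_continuousOn hM
  have hlip : ∀ t ∈ Ico a b, LipschitzOnWith C.toNNReal (fun u => M t u) univ := fun t ht =>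
    ((M t).lipschitz.weaken (by
      rw [← NNReal.coe_le_coe, coe_nnnorm, Real.coe_toNNReal']
      exact (hC t (Ico_subset_Icc_self ht)).trans (le_max_left _ _))).lipschitzOnWith
  exact ODE_solution_unique_of_mem_Icc_right hlip hf hf' (fun _ _ => mem_univ _) hg hg'
    (fun _ _ => mem_univ _) ha

theorem Matrix.continuous_toContinuousLinearMap_toLin' {𝕜 n : Type*}
    [NontriviallyNormedField 𝕜] [CompleteSpace 𝕜] [Fintype n] [DecidableEq n] :
    Continuous fun N : Matrix n n 𝕜 => LinearMap.toContinuousLinearMap (Matrix.toLin' N) :=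
  LinearMap.continuous_of_finiteDimensional
    ((LinearMap.toContinuousLinearMap : ((n → 𝕜) →ₗ[𝕜] n → 𝕜) ≃ₗ[𝕜] _).toLinearMap ∘ₗ
      (Matrix.toLin' : Matrix n n 𝕜 ≃ₗ[𝕜] _).toLinearMap)

theorem Matrix.ODE_solution_unique_of_mem_Icc {𝕜 n : Type*} [RCLike 𝕜] [Fintype n]
    [DecidableEq n] {N : ℝ → Matrix n n 𝕜} {a b : ℝ} (hN : ContinuousOn N (Icc a b))
    {f g : ℝ → n → 𝕜} (hf : ContinuousOn f (Icc a b))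
    (hf' : ∀ t ∈ Ico a b, HasDerivWithinAt f (N t *ᵥ f t) (Ici t) t)
    (hg : ContinuousOn g (Icc a b))
    (hg' : ∀ t ∈ Ico a b, HasDerivWithinAt g (N t *ᵥ g t) (Ici t) t)
    (ha : f a = g a) : EqOn f g (Icc a b) :=
  ContinuousLinearMap.ODE_solution_unique_of_mem_Icc
    (Matrix.continuous_toContinuousLinearMap_toLin'.comp_continuousOn hN) hf hf' hg hg' ha

theorem DifferentiableAt.hasDerivAt_comp_add_smul {E F : Type*} [NormedAddCommGroup E]
    [NormedSpace ℂ E] [NormedAddCommGroup F] [NormedSpace ℂ F] {f : E → F} {p v : E} {t : ℝ}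
    (hf : DifferentiableAt ℂ f (p + t • v)) :
    HasDerivAt (fun s : ℝ => f (p + s • v)) (fderiv ℂ f (p + t • v) v) t := by
  have hline : HasDerivAt (fun s : ℝ => p + s • v) v t := by
    simpa using ((hasDerivAt_id t).smul_const v).const_add p
  exact (hf.hasFDerivAt.restrictScalars ℝ).comp_hasDerivAt t hline

theorem ContinuousLinearMap.apply_zero_prod_eq_sum {𝕜 X F ι : Type*}
    [NontriviallyNormedField 𝕜] [NormedAddCommGroup X] [NormedSpace 𝕜 X]
    [NormedAddCommGroup F] [NormedSpace 𝕜 F] [Fintype ι] [DecidableEq ι]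
    (L : X × (ι → 𝕜) →L[𝕜] F) (w : ι → 𝕜) :
    L (0, w) = ∑ k, w k • L (0, Pi.single k 1) := by
  have hw : ((0 : X), w) = ∑ k, w k • ((0 : X), Pi.single k (1 : 𝕜)) := by
    ext
    · simp [Prod.fst_sum]
    · simp only [Prod.snd_sum, Prod.smul_mk, smul_zero]
      exact congrFun (pi_eq_sum_univ' w) _
  rw [hw, map_sum]
  simp only [map_smul]

theorem IsPreconnected.eqOn_of_eq_imp_eventuallyEq {X Y : Type*} [TopologicalSpace X]
    [TopologicalSpace Y] [T2Space Y] {U : Set X} {f g : X → Y} (hU : IsPreconnected U)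
    (hU' : IsOpen U) (hf : ContinuousOn f U) (hg : ContinuousOn g U)
    (hloc : ∀ y ∈ U, f y = g y → f =ᶠ[𝓝 y] g) {y₀ : X} (hy₀ : y₀ ∈ U)
    (h : f y₀ = g y₀) : EqOn f g U := by
  set S := {y | y ∈ U ∧ f y = g y}
  have hSU : S ⊆ U := fun _ hy => hy.1
  have hS : IsOpen S := isOpen_iff_mem_nhds.2 fun y ⟨hy, hfg⟩ =>
    (hU'.eventually_mem hy).and (hloc y hy hfg)
  have hclosed : closure S ∩ U ⊆ S := fun z hz =>
    ⟨hz.2, EqOn.of_subset_closure (fun _ hy => hy.2) (hf.mono inter_subset_right)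
      (hg.mono inter_subset_right) (subset_inter subset_closure hSU) inter_subset_left hz⟩
  exact fun y hy => (hU.subset_of_closure_inter_subset hS ⟨y₀, hy₀, hy₀, h⟩ hclosed hy).2

section PfaffianSystem

variable {X : Type*} [NormedAddCommGroup X] [NormedSpace ℂ X] {ι κ : Type*} [Fintype ι]
  [DecidableEq ι] [Fintype κ]

/-- `∂f/∂y_k = A_k · f` on `s`, componentwise. Since `fderiv` is `0` where `f` is not
differentiable, this is only meaningful together with a differentiability hypothesis. -/
def IsPfaffianSolution (A : ι → X × (ι → ℂ) → Matrix κ κ ℂ) (f : X × (ι → ℂ) → κ → ℂ)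
    (s : Set (X × (ι → ℂ))) : Prop :=
  ∀ k, ∀ p ∈ s, ∀ a, fderiv ℂ (fun p => f p a) p (0, Pi.single k 1) = ∑ b, A k p a b * f p b

variable {A : ι → X × (ι → ℂ) → Matrix κ κ ℂ} {s : Set (X × (ι → ℂ))}

theorem IsPfaffianSolution.hasDerivAt_comp_segment {f : X × (ι → ℂ) → κ → ℂ}
    (hf : IsPfaffianSolution A f s) {x : X} {y₀ w : ι → ℂ} {t : ℝ}
    (hp : (x, y₀ + t • w) ∈ s) (hdiff : DifferentiableAt ℂ f (x, y₀ + t • w)) :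
    HasDerivAt (fun τ : ℝ => f (x, y₀ + τ • w))
      ((∑ k, w k • A k (x, y₀ + t • w)) *ᵥ f (x, y₀ + t • w)) t := by
  have hline : ∀ τ : ℝ, (x, y₀ + τ • w) = (x, y₀) + τ • ((0 : X), w) := fun τ => by simp
  simp only [hline] at hp hdiff ⊢
  refine hasDerivAt_pi.2 fun a => ?_
  convert (differentiableAt_pi.1 hdiff a).hasDerivAt_comp_add_smul using 1
  rw [ContinuousLinearMap.apply_zero_prod_eq_sum, Matrix.sum_mulVec]
  simp only [Finset.sum_apply, Matrix.smul_mulVec, Pi.smul_apply, smul_eq_mul]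
  exact Finset.sum_congr rfl fun k _ => congrArg (w k * ·) (hf k _ hp a).symm

theorem IsPfaffianSolution.eq_of_segment_subset [DecidableEq κ] {f₁ f₂ : X × (ι → ℂ) → κ → ℂ}
    (hA : ∀ k a b, ContinuousOn (fun p => A k p a b) s)
    (hf₁ : ∀ p ∈ s, DifferentiableAt ℂ f₁ p) (hf₂ : ∀ p ∈ s, DifferentiableAt ℂ f₂ p)
    (hpde₁ : IsPfaffianSolution A f₁ s) (hpde₂ : IsPfaffianSolution A f₂ s)
    {x : X} {y₀ y : ι → ℂ} (hseg : ∀ t ∈ Icc (0 : ℝ) 1, (x, y₀ + t • (y - y₀)) ∈ s)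
    (h₀ : f₁ (x, y₀) = f₂ (x, y₀)) : f₁ (x, y) = f₂ (x, y) := by
  set γ : ℝ → X × (ι → ℂ) := fun t => (x, y₀ + t • (y - y₀))
  have hγ : Continuous γ := by fun_prop
  have hN : ContinuousOn (fun t => ∑ k, (y - y₀) k • A k (γ t)) (Icc 0 1) :=
    continuousOn_finsetSum _ fun k _ => ContinuousOn.const_smul
      (continuousOn_pi.2 fun a => continuousOn_pi.2 fun b =>
        (hA k a b).comp hγ.continuousOn hseg : ContinuousOn (fun t => A k (γ t)) _) ((y - y₀) k)
  have hcont : ∀ f : X × (ι → ℂ) → κ → ℂ, (∀ p ∈ s, DifferentiableAt ℂ f p) →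
      ContinuousOn (f ∘ γ) (Icc 0 1) := fun f hf t ht =>
    (ContinuousAt.comp (f := γ) (x := t) (hf _ (hseg t ht)).continuousAt hγ.continuousAt).continuousWithinAt
  have hsol := Matrix.ODE_solution_unique_of_mem_Icc hN (hcont f₁ hf₁)
    (fun t ht => (hpde₁.hasDerivAt_comp_segment (hseg t (Ico_subset_Icc_self ht))
      (hf₁ _ (hseg t (Ico_subset_Icc_self ht)))).hasDerivWithinAt)
    (hcont f₂ hf₂)
    (fun t ht => (hpde₂.hasDerivAt_comp_segment (hseg t (Ico_subset_Icc_self ht))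
      (hf₂ _ (hseg t (Ico_subset_Icc_self ht)))).hasDerivWithinAt)
    (by simpa [γ] using h₀)
  simpa [γ] using hsol (right_mem_Icc.2 zero_le_one)

end PfaffianSystem

theorem pfaffian_system_uniqueness_general (q d r : ℕ)
    (U₁ : Set (Fin q → ℂ)) (U₂ : Set (Fin d → ℂ))
    (hU₂ : IsOpen U₂)
    (h02 : (0 : Fin d → ℂ) ∈ U₂) (hconn : IsConnected U₂)
    (A : Fin d → ((Fin q → ℂ) × (Fin d → ℂ)) → Matrix (Fin r) (Fin r) ℂ)
    (hA : ∀ (k : Fin d) (a b : Fin r), AnalyticOnNhd ℂ (fun p => A k p a b) (U₁ ×ˢ U₂))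
    (f₁ f₂ : ((Fin q → ℂ) × (Fin d → ℂ)) → (Fin r → ℂ))
    (hf₁ : AnalyticOnNhd ℂ f₁ (U₁ ×ˢ U₂)) (hf₂ : AnalyticOnNhd ℂ f₂ (U₁ ×ˢ U₂))
    (hpde₁ : ∀ k : Fin d, ∀ p ∈ U₁ ×ˢ U₂, ∀ a : Fin r,
      fderiv ℂ (fun p => f₁ p a) p (0, Pi.single k 1) = ∑ b, A k p a b * f₁ p b)
    (hpde₂ : ∀ k : Fin d, ∀ p ∈ U₁ ×ˢ U₂, ∀ a : Fin r,
      fderiv ℂ (fun p => f₂ p a) p (0, Pi.single k 1) = ∑ b, A k p a b * f₂ p b)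
    (hinit : ∀ x ∈ U₁, f₁ (x, 0) = f₂ (x, 0)) :
    Set.EqOn f₁ f₂ (U₁ ×ˢ U₂) := by
  rintro ⟨x, y⟩ ⟨hx, hy⟩
  have hslice : ∀ f : (Fin q → ℂ) × (Fin d → ℂ) → Fin r → ℂ, AnalyticOnNhd ℂ f (U₁ ×ˢ U₂) →
      ContinuousOn (fun z => f (x, z)) U₂ := fun f hf =>
    hf.continuousOn.comp (continuousOn_const.prodMk continuousOn_id) fun _ hz => ⟨hx, hz⟩
  refine hconn.isPreconnected.eqOn_of_eq_imp_eventuallyEq hU₂ (hslice f₁ hf₁) (hslice f₂ hf₂)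
    (fun z hz heq => ?_) h02 (hinit x hx) hy
  obtain ⟨ε, hε, hball⟩ := Metric.isOpen_iff.1 hU₂ z hz
  filter_upwards [ball_mem_nhds z hε] with z' hz'
  exact IsPfaffianSolution.eq_of_segment_subset (fun k a b => (hA k a b).continuousOn)
    (fun p hp => (hf₁ p hp).differentiableAt) (fun p hp => (hf₂ p hp).differentiableAt)
    hpde₁ hpde₂ (fun t ht => ⟨hx, hball ((convex_ball z ε).add_smul_sub_mem
      (mem_ball_self hε) hz' ht)⟩) heq

/-- Uniqueness of analytic solutions of a linear Pfaffian system with parameters: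
two solutions of `∂f/∂y_k = A_k · f` on `U₁ × U₂` agreeing at `y = 0` coincide. -/
theorem pfaffian_system_uniqueness (q d r : ℕ) (hd : 1 ≤ d) (hr : 1 ≤ r)
    (U₁ : Set (Fin q → ℂ)) (U₂ : Set (Fin d → ℂ))
    (hU₁ : IsOpen U₁) (hU₂ : IsOpen U₂)
    (h02 : (0 : Fin d → ℂ) ∈ U₂) (hconn : IsConnected U₂)
    (A : Fin d → ((Fin q → ℂ) × (Fin d → ℂ)) → Matrix (Fin r) (Fin r) ℂ)
    (hA : ∀ (k : Fin d) (a b : Fin r), AnalyticOnNhd ℂ (fun p => A k p a b) (U₁ ×ˢ U₂))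
    (f₁ f₂ : ((Fin q → ℂ) × (Fin d → ℂ)) → (Fin r → ℂ))
    (hf₁ : AnalyticOnNhd ℂ f₁ (U₁ ×ˢ U₂)) (hf₂ : AnalyticOnNhd ℂ f₂ (U₁ ×ˢ U₂))
    (hpde₁ : ∀ k : Fin d, ∀ p ∈ U₁ ×ˢ U₂, ∀ a : Fin r,
      fderiv ℂ (fun p => f₁ p a) p (0, Pi.single k 1) = ∑ b, A k p a b * f₁ p b)
    (hpde₂ : ∀ k : Fin d, ∀ p ∈ U₁ ×ˢ U₂, ∀ a : Fin r,
      fderiv ℂ (fun p => f₂ p a) p (0, Pi.single k 1) = ∑ b, A k p a b * f₂ p b)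
    (hinit : ∀ x ∈ U₁, f₁ (x, 0) = f₂ (x, 0)) :
    Set.EqOn f₁ f₂ (U₁ ×ˢ U₂) :=
  pfaffian_system_uniqueness_general q d r U₁ U₂ hU₂ h02 hconn A hA f₁ f₂ hf₁ hf₂ hpde₁ hpde₂ hinit
end

section
/- Let U ⊆ ℂ be open, and let a, b : U → ℂ be complex-analytic. Let f_1, f_2 : U → ℂ be complex-analytic solutions of the second-order linear differential equation f'' + a·f' + b·f = 0 on U. Let z ∈ U be a point with f_2(z) ≠ 0 and with nonvanishing Wronskian f_1'(z)·f_2(z) − f_1(z)·f_2'(z) ≠ 0. Then the Schwarzian derivative of the quotient φ = f_1/f_2 (defined and holomorphic on a neighborhood of z) satisfies Θ(φ)(z) = b(z)/3 − (a(z)² + 2·a'(z))/12. -/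
/-!
Write `φ = f₁ / f₂` and `W = f₁' f₂ - f₁ f₂'`. Then `φ' = W / f₂²`, and Abel's identity `W' = -a W`
gives `φ'' = L φ'` with `L = -a - 2 f₂'/f₂`. In terms of this pre-Schwarzian, `6 Θ(φ) = L' - L²/2`;
substituting `f₂'' = -a f₂' - b f₂` into `L'` leaves `2b - a²/2 - a'`.
-/

open Filter Topology

variable {𝕜 : Type*} [NontriviallyNormedField 𝕜]

/-- Deligne's normalization: one sixth of the classical Schwarzian derivative. -/
noncomputable def schwarzian (φ : 𝕜 → 𝕜) (z : 𝕜) : 𝕜 :=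
  (deriv φ z * (deriv (deriv (deriv φ)) z / 6) - (deriv (deriv φ) z / 2) ^ 2) / deriv φ z ^ 2

noncomputable def wronskian (f₁ f₂ : 𝕜 → 𝕜) (w : 𝕜) : 𝕜 :=
  deriv f₁ w * f₂ w - f₁ w * deriv f₂ w

theorem schwarzian_eq_of_deriv_eq_mul [CharZero 𝕜] {φ g L : 𝕜 → 𝕜} {L' z : 𝕜}
    (hφ : deriv φ =ᶠ[𝓝 z] g) (hg : ∀ᶠ w in 𝓝 z, HasDerivAt g (L w * g w) w)
    (hL : HasDerivAt L L' z) (hgz : g z ≠ 0) :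
    schwarzian φ z = (L' - L z ^ 2 / 2) / 6 := by
  have hφ' : deriv (deriv φ) =ᶠ[𝓝 z] fun w => L w * g w :=
    hφ.deriv.trans (hg.mono fun _ hw => hw.deriv)
  have hφ'' : deriv (deriv (deriv φ)) z = L' * g z + L z * (L z * g z) :=
    (hL.mul hg.self_of_nhds).deriv ▸ hφ'.deriv_eq
  rw [schwarzian, hφ.eq_of_nhds, hφ'.eq_of_nhds, hφ'']
  field_simp
  ring

theorem hasDerivAt_wronskian {a b f₁ f₂ : 𝕜 → 𝕜} {w : 𝕜}
    (h₁ : DifferentiableAt 𝕜 f₁ w) (h₁' : DifferentiableAt 𝕜 (deriv f₁) w)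
    (h₂ : DifferentiableAt 𝕜 f₂ w) (h₂' : DifferentiableAt 𝕜 (deriv f₂) w)
    (hode₁ : deriv (deriv f₁) w + a w * deriv f₁ w + b w * f₁ w = 0)
    (hode₂ : deriv (deriv f₂) w + a w * deriv f₂ w + b w * f₂ w = 0) :
    HasDerivAt (wronskian f₁ f₂) (-a w * wronskian f₁ f₂ w) w := by
  refine ((h₁'.hasDerivAt.mul h₂.hasDerivAt).sub (h₁.hasDerivAt.mul h₂'.hasDerivAt)).congr_deriv ?_
  rw [wronskian]
  linear_combination f₂ w * hode₁ - f₁ w * hode₂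

theorem hasDerivAt_div_sq_of_hasDerivAt_mul_self {W f : 𝕜 → 𝕜} {c w : 𝕜}
    (hW : HasDerivAt W (c * W w) w) (hf : DifferentiableAt 𝕜 f w) (hfw : f w ≠ 0) :
    HasDerivAt (fun u => W u / f u ^ 2)
      ((c - 2 * (deriv f w / f w)) * (W w / f w ^ 2)) w := by
  refine (hW.fun_div (hf.hasDerivAt.fun_pow 2) (pow_ne_zero 2 hfw)).congr_deriv ?_
  field_simp
  ring

theorem schwarzian_of_ratio_of_solutions_general (U : Set ℂ) (hU : IsOpen U)
    (a b f₁ f₂ : ℂ → ℂ)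
    (ha : AnalyticOnNhd ℂ a U)
    (hf₁ : AnalyticOnNhd ℂ f₁ U) (hf₂ : AnalyticOnNhd ℂ f₂ U)
    (hode₁ : ∀ w ∈ U, deriv (deriv f₁) w + a w * deriv f₁ w + b w * f₁ w = 0)
    (hode₂ : ∀ w ∈ U, deriv (deriv f₂) w + a w * deriv f₂ w + b w * f₂ w = 0)
    (z : ℂ) (hz : z ∈ U) (hf₂z : f₂ z ≠ 0)
    (hW : deriv f₁ z * f₂ z - f₁ z * deriv f₂ z ≠ 0) :
    (deriv (fun w => f₁ w / f₂ w) z * (deriv (deriv (deriv (fun w => f₁ w / f₂ w))) z / 6)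
        - (deriv (deriv (fun w => f₁ w / f₂ w)) z / 2) ^ 2)
      / (deriv (fun w => f₁ w / f₂ w) z) ^ 2
      = b z / 3 - (a z ^ 2 + 2 * deriv a z) / 12 := by
  have hf₁' := hf₁.deriv
  have hf₂' := hf₂.deriv
  have hnear : ∀ᶠ w in 𝓝 z, w ∈ U ∧ f₂ w ≠ 0 :=
    (hU.eventually_mem hz).and ((hf₂ z hz).continuousAt.eventually_ne hf₂z)
  have hratio : deriv (fun w => f₁ w / f₂ w) =ᶠ[𝓝 z] fun w => wronskian f₁ f₂ w / f₂ w ^ 2 :=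
    hnear.mono fun w ⟨hw, hf₂w⟩ =>
      ((hf₁ w hw).differentiableAt.hasDerivAt.div (hf₂ w hw).differentiableAt.hasDerivAt hf₂w).deriv
  have hlog : ∀ᶠ w in 𝓝 z, HasDerivAt (fun u => wronskian f₁ f₂ u / f₂ u ^ 2)
      ((-a w - 2 * (deriv f₂ w / f₂ w)) * (wronskian f₁ f₂ w / f₂ w ^ 2)) w :=
    hnear.mono fun w ⟨hw, hf₂w⟩ =>
      have hWw := hasDerivAt_wronskian (hf₁ w hw).differentiableAt (hf₁' w hw).differentiableAt
        (hf₂ w hw).differentiableAt (hf₂' w hw).differentiableAt (hode₁ w hw) (hode₂ w hw)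
      hasDerivAt_div_sq_of_hasDerivAt_mul_self hWw (hf₂ w hw).differentiableAt hf₂w
  have hL : HasDerivAt (fun w => -a w - 2 * (deriv f₂ w / f₂ w))
      (-deriv a z - 2 * ((deriv (deriv f₂) z * f₂ z - deriv f₂ z * deriv f₂ z) / f₂ z ^ 2)) z :=
    (ha z hz).differentiableAt.hasDerivAt.neg.sub
      (((hf₂' z hz).differentiableAt.hasDerivAt.div
        (hf₂ z hz).differentiableAt.hasDerivAt hf₂z).const_mul 2)
  change schwarzian (fun w => f₁ w / f₂ w) z = _
  rw [schwarzian_eq_of_deriv_eq_mul hratio hlog hL (div_ne_zero hW (pow_ne_zero 2 hf₂z)),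
    show deriv (deriv f₂) z = -(a z * deriv f₂ z) - b z * f₂ z by
    linear_combination hode₂ z hz]
  field_simp
  ring

/-- The Schwarzian derivative (in Deligne's normalization
`Θ(φ) = (φ'·(φ'''/6) − (φ''/2)²)/(φ')²`) of the ratio of two solutions of
`f'' + a·f' + b·f = 0` equals `b/3 − (a² + 2a')/12`. -/
theorem schwarzian_of_ratio_of_solutions (U : Set ℂ) (hU : IsOpen U)
    (a b f₁ f₂ : ℂ → ℂ)
    (ha : AnalyticOnNhd ℂ a U) (hb : AnalyticOnNhd ℂ b U)
    (hf₁ : AnalyticOnNhd ℂ f₁ U) (hf₂ : AnalyticOnNhd ℂ f₂ U)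
    (hode₁ : ∀ w ∈ U, deriv (deriv f₁) w + a w * deriv f₁ w + b w * f₁ w = 0)
    (hode₂ : ∀ w ∈ U, deriv (deriv f₂) w + a w * deriv f₂ w + b w * f₂ w = 0)
    (z : ℂ) (hz : z ∈ U) (hf₂z : f₂ z ≠ 0)
    (hW : deriv f₁ z * f₂ z - f₁ z * deriv f₂ z ≠ 0) :
    (deriv (fun w => f₁ w / f₂ w) z * (deriv (deriv (deriv (fun w => f₁ w / f₂ w))) z / 6)
        - (deriv (deriv (fun w => f₁ w / f₂ w)) z / 2) ^ 2)
      / (deriv (fun w => f₁ w / f₂ w) z) ^ 2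
      = b z / 3 - (a z ^ 2 + 2 * deriv a z) / 12 :=
  schwarzian_of_ratio_of_solutions_general U hU a b f₁ f₂ ha hf₁ hf₂ hode₁ hode₂ z hz hf₂z hW
end

section
/- For every n ≥ 1 there exist a vector Z ∈ ℂ^n and an n×n complex matrix W such that the only pair (A, B), with A an invertible n×n complex matrix and B ∈ ℂ^n, satisfying both A·Z = Z and (Aᵀ)⁻¹ · W · Aᵀ − (Bᵀ·Z) · Id − (Aᵀ)⁻¹ · B · (A·Z)ᵀ = W, is A = Id and B = 0. -/
/-!
Take `W` diagonal with distinct entries and `Z = (1, …, 1)`. Taking traces in the fixed-point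
equation, the conjugation term drops out and `(Aᵀ)⁻¹ B Zᵀ` has trace `Bᵀ A⁻¹ Z = Bᵀ Z`, so
`(n + 1) Bᵀ Z = 0`. What remains says `W Aᵀ - Aᵀ W = B Zᵀ`: its diagonal forces `B = 0`, its
off-diagonal entries force `Aᵀ` to be diagonal since the entries of `W` are distinct, and then
`A Z = Z` forces `A = 1`.
-/

open Matrix

namespace Matrix

variable {ι K : Type*} [Fintype ι] [DecidableEq ι] [Field K]

theorem dotProduct_eq_zero_of_isotropy [CharZero K] {A W : Matrix ι ι K} {B Z : ι → K}
    (hA : IsUnit A.det) (hAZ : A *ᵥ Z = Z)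
    (h : Aᵀ⁻¹ * W * Aᵀ - (B ⬝ᵥ Z) • 1 - Aᵀ⁻¹ * vecMulVec B (A *ᵥ Z) = W) :
    B ⬝ᵥ Z = 0 := by
  have hZ : Z ᵥ* Aᵀ⁻¹ = Z := by
    rw [← transpose_nonsing_inv, vecMul_transpose, ← hAZ, mulVec_mulVec,
      nonsing_inv_mul A hA, one_mulVec, hAZ]
  have hdot : (Aᵀ⁻¹ *ᵥ B) ⬝ᵥ Z = B ⬝ᵥ Z := by
    rw [dotProduct_comm, dotProduct_mulVec, hZ, dotProduct_comm]
  have hAt : IsUnit Aᵀ := (isUnit_iff_isUnit_det _).mpr (isUnit_det_transpose A hA)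
  have htrace := congrArg trace h
  rw [trace_sub, trace_sub, trace_conj' hAt, trace_smul, trace_one, hAZ, mul_vecMulVec,
    trace_vecMulVec, hdot, smul_eq_mul] at htrace
  have hcard : ((Fintype.card ι : K) + 1) * (B ⬝ᵥ Z) = 0 := by linear_combination -htrace
  exact (mul_eq_zero.mp hcard).resolve_left (Nat.cast_add_one_ne_zero _)

theorem mul_transpose_eq_of_isotropy {A W : Matrix ι ι K} {B Z : ι → K}
    (hA : IsUnit A.det) (hAZ : A *ᵥ Z = Z)
    (h : Aᵀ⁻¹ * W * Aᵀ - (B ⬝ᵥ Z) • 1 - Aᵀ⁻¹ * vecMulVec B (A *ᵥ Z) = W) :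
    W * Aᵀ = Aᵀ * W + (B ⬝ᵥ Z) • Aᵀ + vecMulVec B Z := by
  have hAt := isUnit_det_transpose A hA
  rw [hAZ, sub_eq_iff_eq_add, sub_eq_iff_eq_add] at h
  calc W * Aᵀ = Aᵀ * (Aᵀ⁻¹ * W * Aᵀ) := by
        rw [Matrix.mul_assoc, Matrix.mul_nonsing_inv_cancel_left _ _ hAt]
    _ = Aᵀ * W + (B ⬝ᵥ Z) • Aᵀ + vecMulVec B Z := by
        rw [h, Matrix.mul_add, Matrix.mul_add, Matrix.mul_nonsing_inv_cancel_left _ _ hAt,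
          Matrix.mul_smul, Matrix.mul_one]
        abel

theorem isDiag_and_eq_zero_of_diagonal_mul_eq {d : ι → K} (hd : Function.Injective d)
    {M : Matrix ι ι K} {B Z : ι → K} (hZ : ∀ i, Z i ≠ 0)
    (h : diagonal d * M = M * diagonal d + vecMulVec B Z) : M.IsDiag ∧ B = 0 := by
  have hentry : ∀ i j, (d i - d j) * M i j = B i * Z j := fun i j => by
    have hij := congrFun (congrFun h i) j
    simp only [diagonal_mul, mul_diagonal, add_apply, vecMulVec_apply] at hij
    linear_combination hij
  have hB : B = 0 := funext fun i => by
    simpa [hZ i] using (hentry i i).symm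
  refine ⟨fun i j hij => ?_, hB⟩
  have hij' := hentry i j
  rw [hB, Pi.zero_apply, zero_mul] at hij'
  exact (mul_eq_zero.mp hij').resolve_left (sub_ne_zero.mpr (hd.ne hij))

theorem IsDiag.eq_one_of_mulVec_eq {A : Matrix ι ι K} (hA : A.IsDiag) {Z : ι → K}
    (hZ : ∀ i, Z i ≠ 0) (hAZ : A *ᵥ Z = Z) : A = 1 := by
  rw [isDiag_iff_diagonal_diag] at hA
  rw [← hA] at hAZ ⊢
  rw [← diagonal_one]
  refine congrArg diagonal (funext fun i => mul_right_cancel₀ (hZ i) ?_)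
  simpa [mulVec_diagonal] using congrFun hAZ i

end Matrix

theorem exists_point_with_trivial_isotropy_general (n : ℕ) :
    ∃ (Z : Fin n → ℂ) (W : Matrix (Fin n) (Fin n) ℂ),
      ∀ (A : Matrix (Fin n) (Fin n) ℂ) (B : Fin n → ℂ),
        IsUnit A.det →
        A.mulVec Z = Z →
        Aᵀ⁻¹ * W * Aᵀ - (B ⬝ᵥ Z) • (1 : Matrix (Fin n) (Fin n) ℂ)
            - Aᵀ⁻¹ * vecMulVec B (A.mulVec Z) = W →
        A = 1 ∧ B = 0 := by
  refine ⟨fun _ => 1, diagonal fun i => (i : ℂ), fun A B hA hAZ h => ?_⟩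
  have hc := dotProduct_eq_zero_of_isotropy hA hAZ h
  have hcomm := mul_transpose_eq_of_isotropy hA hAZ h
  rw [hc, zero_smul, add_zero] at hcomm
  obtain ⟨hdiag, hB⟩ := isDiag_and_eq_zero_of_diagonal_mul_eq
    (fun i j hij => Fin.ext (by exact_mod_cast hij)) (fun _ => one_ne_zero) hcomm
  exact ⟨hdiag.transpose.eq_one_of_mulVec_eq (fun _ => one_ne_zero) hAZ, hB⟩

/-- Trivial-isotropy lemma in coordinates: there is a point `(Z, W)` of the fiber of
the second prolongation of `ℙⁿ` whose isotropy group is trivial, i.e. the only pair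
`(A, B)` with `A` invertible satisfying `A·Z = Z` and
`(Aᵀ)⁻¹·W·Aᵀ − (Bᵀ·Z)·Id − (Aᵀ)⁻¹·B·(A·Z)ᵀ = W` is `(Id, 0)`. -/
theorem exists_point_with_trivial_isotropy (n : ℕ) (hn : 1 ≤ n) :
    ∃ (Z : Fin n → ℂ) (W : Matrix (Fin n) (Fin n) ℂ),
      ∀ (A : Matrix (Fin n) (Fin n) ℂ) (B : Fin n → ℂ),
        IsUnit A.det →
        A.mulVec Z = Z →
        Aᵀ⁻¹ * W * Aᵀ - (B ⬝ᵥ Z) • (1 : Matrix (Fin n) (Fin n) ℂ)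
            - Aᵀ⁻¹ * vecMulVec B (A.mulVec Z) = W →
        A = 1 ∧ B = 0 :=
  exists_point_with_trivial_isotropy_general n
end
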